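/- Let μ be a real number with either 0 < μ < (9−√69)/18 or (9+√69)/18 < μ < 1. Then every complex number z satisfying z⁴ + z² − (27/4)(μ−1)μ = 0 has real part equal to 0. -/
import Mathlib


/-- **Linear stability of `L4` in the Newtonian case.** If `0 < μ < (9−√69)/18` or
`(9+√69)/18 < μ < 1`, then every complex root of `λ⁴ + λ² − (27/4)(μ−1)μ` has
zero real part. -/
theorem L4_charpoly_roots_purely_imaginary (μ : ℝ)
    (hμ : (0 < μ ∧ μ < (9 - Real.sqrt 69) / 18) ∨ ((9 + Real.sqrt 69) / 18 < μ ∧ μ < 1)) :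
    ∀ z : ℂ, z ^ 4 + z ^ 2 - (27 / 4 : ℂ) * ((μ : ℂ) - 1) * (μ : ℂ) = 0 → z.re = 0 := by
  have hs : Real.sqrt 69 ^ 2 = 69 := Real.sq_sqrt (by norm_num)
  have hs0 : (0:ℝ) ≤ Real.sqrt 69 := Real.sqrt_nonneg _
  set c : ℝ := (27/4) * μ * (1 - μ) with hcdef
  have hc : 0 < c := by
    rcases hμ with ⟨h0, h1⟩ | ⟨h0, h1⟩
    · have : μ < 1 := by nlinarith
      have : 0 < 1 - μ := by linarith
      positivity
    · have : 0 < μ := by nlinarith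
      have : 0 < 1 - μ := by linarith
      positivity
  have hc4 : 4 * c < 1 := by
    rcases hμ with ⟨h0, h1⟩ | ⟨h0, h1⟩
    · have h : Real.sqrt 69 < 9 - 18 * μ := by linarith
      nlinarith [sq_nonneg (9 - 18 * μ)]
    · have h : Real.sqrt 69 < 18 * μ - 9 := by linarith
      nlinarith [sq_nonneg (18 * μ - 9)]
  intro z hz
  set a := z.re with ha
  set b := z.im with hb
  have hre : a^4 - 6*a^2*b^2 + b^4 + a^2 - b^2 + c = 0 := by
    have := congrArg Complex.re hz
    simp [Complex.ext_iff, pow_succ, Complex.mul_re, Complex.mul_im, Complex.ofReal_re,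
      Complex.ofReal_im] at this
    ring_nf at this ⊢
    linarith [this]
  have him : 2*a*b*(2*a^2 - 2*b^2 + 1) = 0 := by
    have := congrArg Complex.im hz
    simp [Complex.ext_iff, pow_succ, Complex.mul_re, Complex.mul_im, Complex.ofReal_re,
      Complex.ofReal_im] at this
    ring_nf at this ⊢
    linarith [this]
  by_contra hane
  have ha2 : 0 < a^2 := by positivity
  rcases mul_eq_zero.mp him with h | h
  · rcases mul_eq_zero.mp h with h' | hb0
    · rcases mul_eq_zero.mp h' with h'' | ha0
      · norm_num at h''
      · exact hane ha0
    · rw [hb0] at hre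
      nlinarith [sq_nonneg a, sq_nonneg (a^2)]
  · -- 2a² − 2b² + 1 = 0
    nlinarith [sq_nonneg (a^2), sq_nonneg b]
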